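/- Let g : ℝ → ℂ be a smooth function supported in [K, 2K] for some K ≥ 1, with derivative bounds |g^{(j)}(y)| ≤ C_j K^{-j} for all j ≥ 0. Define h(x) = ∫_0^∞ g(√(2xy)) sin(x + y - π/4) (πy)^{-1/2} dy for x > 0. Then for each integer j ≥ 0 there is a constant C depending only on j and the C_i such that |h(x)| ≤ C (x K^{-2})^j for all x > 0. -/

import Mathlib

open MeasureTheory Real Set Function intervalIntegral
open scoped ContDiff Nat Topology

/-- Recursively-defined constants for the iterated integration by parts. -/
noncomputable def DD (C : ℕ → ℝ) : ℕ → ℕ → ℝ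
  | 0, i => max (C i) 0
  | (m+1), i => ∑ k ∈ Finset.range (i+2),
      (((i+1).choose k : ℝ) * (Nat.factorial k : ℝ)) * DD C m (i+1-k)

lemma DD_nonneg (C : ℕ → ℝ) : ∀ m i, 0 ≤ DD C m i
  | 0, _ => le_max_right _ _
  | (m+1), i => Finset.sum_nonneg fun k _ => mul_nonneg (by positivity) (DD_nonneg C m _)

/-- iterated derivatives vanish off the (closed) support interval -/
lemma iterDeriv_zero_off {K : ℝ} {f : ℝ → ℂ} (hs : Function.support f ⊆ Set.Icc K (2*K))
    {t : ℝ} (ht : t ∉ Set.Icc K (2*K)) (i : ℕ) : iteratedDeriv i f t = 0 := by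
  have hopen : IsOpen (Set.Icc K (2*K))ᶜ := isOpen_compl_iff.2 isClosed_Icc
  have hev : f =ᶠ[𝓝 t] (fun _ => (0:ℂ)) := by
    filter_upwards [hopen.mem_nhds ht] with s hs'
    by_contra h
    exact hs' (hs h)
  have hft : f t = 0 := by
    by_contra h; exact ht (hs h)
  have : iteratedFDeriv ℝ i f t = iteratedFDeriv ℝ i (fun _ => (0:ℂ)) t := by
    rw [← iteratedFDerivWithin_univ, ← iteratedFDerivWithin_univ]
    exact Filter.EventuallyEq.iteratedFDerivWithin_eq
      (by simpa [nhdsWithin_univ] using hev) (by simp [hft]) i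
  have h0 : iteratedDeriv i (fun _ : ℝ => (0:ℂ)) t = 0 := by
    simp [iteratedDeriv_eq_iteratedFDeriv, iteratedFDeriv_zero_fun]
  rw [iteratedDeriv_eq_iteratedFDeriv, this, ← iteratedDeriv_eq_iteratedFDeriv]
  exact h0

lemma q_smooth {K : ℝ} (hK : 1 ≤ K) {f : ℝ → ℂ} (hf : ContDiff ℝ ∞ f)
    (hsupp : Function.support f ⊆ Set.Icc K (2*K)) :
    ContDiff ℝ ∞ (fun s => (s⁻¹ : ℝ) • f s) ∧
    Function.support (fun s => (s⁻¹ : ℝ) • f s) ⊆ Set.Icc K (2*K) := by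
  have hK0 : (0:ℝ) < K := lt_of_lt_of_le one_pos hK
  have hf0 : ∀ s, s ∉ Set.Icc K (2*K) → f s = 0 := by
    intro s hs
    by_contra h; exact hs (hsupp h)
  constructor
  · rw [contDiff_iff_contDiffAt]
    intro t
    rcases lt_or_ge t K with htK | htK
    · have : (fun s => (s⁻¹ : ℝ) • f s) =ᶠ[𝓝 t] (fun _ => (0:ℂ)) := by
        filter_upwards [Iio_mem_nhds htK] with s hs
        have : f s = 0 := hf0 s (by intro hmem; exact absurd hmem.1 (not_le.2 hs))
        simp [this]
      exact (contDiffAt_const (c := (0:ℂ))).congr_of_eventuallyEq this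
    · have ht0 : t ≠ 0 := ne_of_gt (lt_of_lt_of_le hK0 htK)
      exact ((contDiffAt_id.inv ht0)).smul hf.contDiffAt
  · intro s hsq
    apply hsupp
    intro hfs
    apply hsq
    simp [hfs]

/-- the key Leibniz estimate for `t ↦ t⁻¹ • f t`. -/
lemma q_step {K : ℝ} (hK : 1 ≤ K) {f : ℝ → ℂ} (hf : ContDiff ℝ ∞ f)
    (hsupp : Function.support f ⊆ Set.Icc K (2*K)) {B : ℕ → ℝ} (hB : ∀ i, 0 ≤ B i)
    (hA : ∀ i t, ‖iteratedDeriv i f t‖ ≤ B i / K ^ i) :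
    ∀ n t, ‖iteratedDeriv n (fun s => (s⁻¹ : ℝ) • f s) t‖ ≤
      (∑ k ∈ Finset.range (n+1), ((n.choose k : ℝ) * (Nat.factorial k : ℝ)) * B (n - k))
        / K ^ (n+1) := by
  have hK0 : (0:ℝ) < K := lt_of_lt_of_le one_pos hK
  have hsuppq := (q_smooth hK hf hsupp).2
  intro n t
  have hsum_nonneg : 0 ≤ (∑ k ∈ Finset.range (n+1),
      ((n.choose k : ℝ) * (Nat.factorial k : ℝ)) * B (n - k)) / K ^ (n+1) := by
    apply div_nonneg _ (by positivity)
    exact Finset.sum_nonneg fun k _ => mul_nonneg (by positivity) (hB _)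
  by_cases ht : t ∈ Set.Icc K (2*K)
  · have ht0 : (0:ℝ) < t := lt_of_lt_of_le hK0 ht.1
    have htIoi : t ∈ Set.Ioi (0:ℝ) := ht0
    have hinv : ContDiffOn ℝ ∞ (fun s : ℝ => s⁻¹) (Set.Ioi (0:ℝ)) :=
      contDiffOn_id.inv (fun s hs => ne_of_gt hs)
    have hfon : ContDiffOn ℝ ∞ f (Set.Ioi (0:ℝ)) := hf.contDiffOn
    have hub : UniqueDiffOn ℝ (Set.Ioi (0:ℝ)) := isOpen_Ioi.uniqueDiffOn
    have key := norm_iteratedFDerivWithin_smul_le (𝕜 := ℝ) (f := fun s : ℝ => s⁻¹)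
      (g := f) hinv hfon hub htIoi (n := n) (by exact_mod_cast le_top)
    have hconv : ‖iteratedDeriv n (fun s => (s⁻¹ : ℝ) • f s) t‖ =
        ‖iteratedFDerivWithin ℝ n (fun s => (s⁻¹ : ℝ) • f s) (Set.Ioi (0:ℝ)) t‖ := by
      rw [iteratedFDerivWithin_of_isOpen n isOpen_Ioi htIoi,
        norm_iteratedFDeriv_eq_norm_iteratedDeriv]
    rw [hconv]
    refine le_trans key ?_
    have hterm : ∀ k ∈ Finset.range (n+1),
        (n.choose k : ℝ) * ‖iteratedFDerivWithin ℝ k (fun s : ℝ => s⁻¹) (Set.Ioi (0:ℝ)) t‖ *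
          ‖iteratedFDerivWithin ℝ (n - k) f (Set.Ioi (0:ℝ)) t‖ ≤
        ((n.choose k : ℝ) * (Nat.factorial k : ℝ)) * B (n - k) / K ^ (n+1) := by
      intro k hk
      have hk' : k ≤ n := Nat.lt_succ_iff.mp (Finset.mem_range.mp hk)
      have hinvval : ‖iteratedFDerivWithin ℝ k (fun s : ℝ => s⁻¹) (Set.Ioi (0:ℝ)) t‖ =
          (Nat.factorial k : ℝ) * t ^ (-1 - (k:ℤ)) := by
        rw [iteratedFDerivWithin_of_isOpen k isOpen_Ioi htIoi,
          norm_iteratedFDeriv_eq_norm_iteratedDeriv, iteratedDeriv_eq_iterate]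
        have : deriv^[k] (fun s : ℝ => s⁻¹) t =
            (∏ i ∈ Finset.range k, (-1 - (i:ℝ))) * t ^ (-1 - (k:ℤ)) := by
          rw [show (fun s : ℝ => s⁻¹) = (· ^ (-1 : ℤ)) from by funext s; simp]
          exact_mod_cast iter_deriv_zpow (-1) t k
        rw [this, norm_mul]
        congr 1
        · rw [Real.norm_eq_abs, Finset.abs_prod]
          have : ∀ i ∈ Finset.range k, |(-1 - (i:ℝ))| = ((i+1 : ℕ) : ℝ) := by
            intro i _
            rw [abs_of_nonpos (by push_cast; linarith [Nat.cast_nonneg (α := ℝ) i])]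
            push_cast; ring
          rw [Finset.prod_congr rfl this, ← Nat.cast_prod,
            Finset.prod_range_add_one_eq_factorial]
        · rw [Real.norm_eq_abs, abs_of_nonneg (zpow_nonneg ht0.le _)]
      have hfval : ‖iteratedFDerivWithin ℝ (n-k) f (Set.Ioi (0:ℝ)) t‖ ≤ B (n-k) / K ^ (n-k) := by
        rw [iteratedFDerivWithin_of_isOpen _ isOpen_Ioi htIoi,
          norm_iteratedFDeriv_eq_norm_iteratedDeriv]
        exact hA _ t
      rw [hinvval]
      have hzb : t ^ (-1 - (k:ℤ)) ≤ (K ^ (k+1))⁻¹ := by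
        have h1 : t ^ (-1 - (k:ℤ)) = (t ^ (k+1 : ℕ))⁻¹ := by
          rw [← zpow_natCast t (k+1), ← zpow_neg]
          congr 1
          push_cast; ring
        rw [h1]
        apply inv_anti₀ (by positivity)
        exact pow_le_pow_left₀ hK0.le ht.1 _
      calc (n.choose k : ℝ) * ((Nat.factorial k : ℝ) * t ^ (-1 - (k:ℤ))) *
            ‖iteratedFDerivWithin ℝ (n - k) f (Set.Ioi (0:ℝ)) t‖
          ≤ (n.choose k : ℝ) * ((Nat.factorial k : ℝ) * (K ^ (k+1))⁻¹) * (B (n-k) / K ^ (n-k)) := by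
            have h0 : (0:ℝ) ≤ ‖iteratedFDerivWithin ℝ (n - k) f (Set.Ioi (0:ℝ)) t‖ :=
              norm_nonneg _
            gcongr
        _ = ((n.choose k : ℝ) * (Nat.factorial k : ℝ)) * B (n - k) / (K ^ (k+1) * K ^ (n-k)) := by
            field_simp
        _ = ((n.choose k : ℝ) * (Nat.factorial k : ℝ)) * B (n - k) / K ^ (n+1) := by
            rw [← pow_add]
            congr 2
            omega
    calc ∑ k ∈ Finset.range (n+1), (n.choose k : ℝ) *
          ‖iteratedFDerivWithin ℝ k (fun s : ℝ => s⁻¹) (Set.Ioi (0:ℝ)) t‖ *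
          ‖iteratedFDerivWithin ℝ (n - k) f (Set.Ioi (0:ℝ)) t‖
        ≤ ∑ k ∈ Finset.range (n+1),
            ((n.choose k : ℝ) * (Nat.factorial k : ℝ)) * B (n - k) / K ^ (n+1) :=
          Finset.sum_le_sum hterm
      _ = (∑ k ∈ Finset.range (n+1),
            ((n.choose k : ℝ) * (Nat.factorial k : ℝ)) * B (n - k)) / K ^ (n+1) := by
          rw [Finset.sum_div]
  · rw [iterDeriv_zero_off hsuppq ht n, norm_zero]
    exact hsum_nonneg

/-- the iterated-by-parts amplitudes -/
noncomputable def psiF (x : ℝ) (g : ℝ → ℂ) : ℕ → ℝ → ℂ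
  | 0 => g
  | (m+1) => fun t => (((-1:ℝ))^m * x) • deriv (fun s => (s⁻¹ : ℝ) • psiF x g m s) t

/-- the alternating trigonometric weights -/
noncomputable def wF (x : ℝ) (m : ℕ) (t : ℝ) : ℂ :=
  if Even m then (Real.sin (x + t^2/(2*x) - Real.pi/4) : ℂ)
  else (Real.cos (x + t^2/(2*x) - Real.pi/4) : ℂ)

lemma wF_norm_le (x : ℝ) (m : ℕ) (t : ℝ) : ‖wF x m t‖ ≤ 1 := by
  unfold wF
  split
  · rw [Complex.norm_real, Real.norm_eq_abs]; exact Real.abs_sin_le_one _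
  · rw [Complex.norm_real, Real.norm_eq_abs]; exact Real.abs_cos_le_one _

lemma wF_cont (x : ℝ) (hx : x ≠ 0) (m : ℕ) : Continuous (wF x m) := by
  unfold wF
  split
  · exact Complex.continuous_ofReal.comp (Real.continuous_sin.comp (by fun_prop))
  · exact Complex.continuous_ofReal.comp (Real.continuous_cos.comp (by fun_prop))

lemma psiF_spec {K x : ℝ} (hK : 1 ≤ K) (hx : 0 < x) {g : ℝ → ℂ} {C : ℕ → ℝ}
    (hg : ContDiff ℝ ∞ g) (hsupp : Function.support g ⊆ Set.Icc K (2*K))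
    (hb : ∀ i t, ‖iteratedDeriv i g t‖ ≤ DD C 0 i / K ^ i) :
    ∀ m, ContDiff ℝ ∞ (psiF x g m) ∧ Function.support (psiF x g m) ⊆ Set.Icc K (2*K) ∧
      ∀ i t, ‖iteratedDeriv i (psiF x g m) t‖ ≤ (DD C m i * x^m / K^(2*m)) / K ^ i := by
  have hK0 : (0:ℝ) < K := lt_of_lt_of_le one_pos hK
  intro m
  induction m with
  | zero =>
    refine ⟨hg, hsupp, ?_⟩
    intro i t
    simpa [psiF] using hb i t
  | succ m ih =>
    obtain ⟨hsm, hsupp', hbd⟩ := ih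
    set q : ℝ → ℂ := fun s => (s⁻¹ : ℝ) • psiF x g m s with hqdef
    obtain ⟨hqsm, hqsupp⟩ := q_smooth hK hsm hsupp'
    have hqd := (contDiff_infty_iff_deriv.mp hqsm).2
    have hB : ∀ i, 0 ≤ DD C m i * x^m / K^(2*m) := fun i => by
      have := DD_nonneg C m i; positivity
    have hq := q_step hK hsm hsupp' (B := fun i => DD C m i * x^m / K^(2*m)) hB hbd
    have hpsi : psiF x g (m+1) = fun t => (((-1:ℝ))^m * x) • deriv q t := rfl
    have hderiv_zero : ∀ t, t ∉ Set.Icc K (2*K) → deriv q t = 0 := by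
      intro t ht
      have := iterDeriv_zero_off hqsupp ht 1
      rwa [iteratedDeriv_one] at this
    refine ⟨?_, ?_, ?_⟩
    · rw [hpsi]
      exact hqd.const_smul _
    · rw [hpsi]
      intro t ht
      by_contra h
      simp only [Function.mem_support] at ht
      exact ht (by simp [hderiv_zero t h])
    · intro i t
      have hrw : iteratedDeriv i (psiF x g (m+1)) t =
          (((-1:ℝ))^m * x) • iteratedDeriv i (deriv q) t := by
        rw [hpsi]
        rw [iteratedDeriv_eq_iteratedFDeriv, iteratedDeriv_eq_iteratedFDeriv,
          show (fun t => (((-1:ℝ))^m * x) • deriv q t) = (((-1:ℝ))^m * x) • (deriv q) from rfl,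
          iteratedFDeriv_const_smul_apply (i := i) (hqd.contDiffAt.of_le (by exact_mod_cast le_top))]
        simp only [ContinuousMultilinearMap.smul_apply]
        rfl
      rw [hrw, norm_smul]
      have habs : ‖((-1:ℝ))^m * x‖ = x := by
        rw [Real.norm_eq_abs, abs_mul, abs_pow, abs_neg, abs_one, one_pow, one_mul,
          abs_of_pos hx]
      rw [habs]
      have hrw2 : iteratedDeriv i (deriv q) t = iteratedDeriv (i+1) q t := by
        rw [iteratedDeriv_succ']
      rw [hrw2]
      have hqb := hq (i+1) t
      calc x * ‖iteratedDeriv (i+1) q t‖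
          ≤ x * ((∑ k ∈ Finset.range (i+2),
              (((i+1).choose k : ℝ) * (Nat.factorial k : ℝ)) *
                (DD C m ((i+1) - k) * x^m / K^(2*m))) / K ^ (i+2)) := by
            exact mul_le_mul_of_nonneg_left hqb hx.le
        _ = (DD C (m+1) i * x^(m+1) / K^(2*(m+1))) / K ^ i := by
            have hsum : (∑ k ∈ Finset.range (i+2),
                (((i+1).choose k : ℝ) * (Nat.factorial k : ℝ)) *
                  (DD C m ((i+1) - k) * x^m / K^(2*m)))
                = DD C (m+1) i * (x^m / K^(2*m)) := by
              rw [show DD C (m+1) i = ∑ k ∈ Finset.range (i+2),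
                (((i+1).choose k : ℝ) * (Nat.factorial k : ℝ)) * DD C m (i+1-k) from rfl]
              rw [Finset.sum_mul]
              apply Finset.sum_congr rfl
              intro k _
              ring
            rw [hsum]
            field_simp
            ring

lemma supp_compact {K : ℝ} {f : ℝ → ℂ} (hsupp : Function.support f ⊆ Set.Icc K (2*K)) :
    HasCompactSupport f :=
  HasCompactSupport.intro isCompact_Icc (fun s hs => by
    by_contra h; exact hs (hsupp h))

lemma ibp_step {K x : ℝ} (hK : 1 ≤ K) (hx : 0 < x) {ψ : ℝ → ℂ} (hsm : ContDiff ℝ ∞ ψ)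
    (hsupp : Function.support ψ ⊆ Set.Icc K (2*K)) (m : ℕ) :
    ∫ t : ℝ, ψ t * wF x m t =
      ∫ t : ℝ, ((((-1:ℝ))^m * x) • deriv (fun s => (s⁻¹ : ℝ) • ψ s) t) * wF x (m+1) t := by
  have hK0 : (0:ℝ) < K := lt_of_lt_of_le one_pos hK
  have hx0 : x ≠ 0 := ne_of_gt hx
  set q : ℝ → ℂ := fun s => (s⁻¹ : ℝ) • ψ s with hqdef
  obtain ⟨hqsm, hqsupp⟩ := q_smooth hK hsm hsupp
  have hqd : Differentiable ℝ q := hqsm.differentiable (by simp)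
  have hqd' := (contDiff_infty_iff_deriv.mp hqsm).2
  have hψ0 : ∀ s, s ∉ Set.Icc K (2*K) → ψ s = 0 := by
    intro s hs; by_contra h; exact hs (hsupp h)
  have key : ∀ t : ℝ, q t * (t:ℂ) = ψ t := by
    intro t
    by_cases h : t = 0
    · subst h
      have : ψ 0 = 0 := hψ0 0 (by simp; intro h'; linarith)
      simp [hqdef, this]
    · have : (t:ℂ) ≠ 0 := by exact_mod_cast h
      rw [hqdef]
      simp only [Complex.real_smul, Complex.ofReal_inv]
      field_simp
  set θ : ℝ → ℝ := fun t => x + t^2/(2*x) - Real.pi/4 with hθdef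
  have hθ : ∀ t : ℝ, HasDerivAt θ (t/x) t := by
    intro t
    have h1 : HasDerivAt (fun t : ℝ => t^2) (2*t) t := by
      simpa using hasDerivAt_pow 2 t
    have h2 : HasDerivAt (fun t : ℝ => t^2/(2*x)) (2*t/(2*x)) t := h1.div_const _
    have h3 : HasDerivAt θ (2*t/(2*x)) t := ((h2.const_add x).sub_const _)
    convert h3 using 1
    field_simp
  set c : ℝ := ((-1:ℝ))^m * x with hcdef
  -- derivative of the next weight
  have hw' : ∀ t : ℝ, HasDerivAt (wF x (m+1))
      ((((((-1:ℝ))^(m+1) * (t/x)) : ℝ) : ℂ) * wF x m t) t := by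
    intro t
    by_cases hm : Even m
    · have hm1 : ¬ Even (m+1) := by simpa [Nat.even_add_one] using hm
      have hodd : Odd (m+1) := Nat.odd_iff.mpr (by rcases hm with ⟨r, hr⟩; omega)
      have hder : HasDerivAt (fun s => Real.cos (θ s)) (-Real.sin (θ t) * (t/x)) t :=
        (Real.hasDerivAt_cos (θ t)).comp t (hθ t)
      have := hder.ofReal_comp
      have heq : (fun s => ((Real.cos (θ s) : ℝ) : ℂ)) = wF x (m+1) := by
        funext s
        simp [wF, hm1, hθdef]
      rw [heq] at this
      convert this using 1
      have hpow : ((-1:ℝ))^(m+1) = -1 := Odd.neg_one_pow hodd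
      simp only [wF, if_pos hm, hpow, hθdef]
      push_cast
      ring
    · have hm1 : Even (m+1) := Nat.even_add_one.mpr hm
      have hder : HasDerivAt (fun s => Real.sin (θ s)) (Real.cos (θ t) * (t/x)) t :=
        (Real.hasDerivAt_sin (θ t)).comp t (hθ t)
      have := hder.ofReal_comp
      have heq : (fun s => ((Real.sin (θ s) : ℝ) : ℂ)) = wF x (m+1) := by
        funext s
        simp [wF, hm1, hθdef]
      rw [heq] at this
      convert this using 1
      have hpow : ((-1:ℝ))^(m+1) = 1 := Even.neg_one_pow hm1
      simp only [wF, if_neg hm, hpow, hθdef]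
      push_cast
      ring
  -- the total derivative identity
  have hG : ∀ t : ℝ, HasDerivAt (fun t => c • (q t * wF x (m+1) t))
      ((c • deriv q t) * wF x (m+1) t - ψ t * wF x m t) t := by
    intro t
    have hq_t : HasDerivAt q (deriv q t) t := (hqd t).hasDerivAt
    have hprod := hq_t.mul (hw' t)
    have := hprod.const_smul c
    refine this.congr_deriv ?_
    have key2 : ((c:ℝ):ℂ) * ((((-1:ℝ))^(m+1) * (t/x) : ℝ) : ℂ) = -(t:ℂ) := by
      rw [hcdef]
      push_cast
      have hpp : ((-1:ℂ))^m * ((-1:ℂ))^(m+1) = -1 := by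
        rw [← pow_add]
        exact Odd.neg_one_pow ⟨m, by ring⟩
      have hxC : (x:ℂ) ≠ 0 := by exact_mod_cast hx0
      have hxt : (x:ℂ) * ((t:ℂ)/(x:ℂ)) = (t:ℂ) := by
        field_simp
      calc ((-1:ℂ))^m * (x:ℂ) * (((-1:ℂ))^(m+1) * ((t:ℂ)/(x:ℂ)))
          = (((-1:ℂ))^m * ((-1:ℂ))^(m+1)) * ((x:ℂ) * ((t:ℂ)/(x:ℂ))) := by ring
        _ = -(t:ℂ) := by rw [hpp, hxt]; ring
    have hsecond : ((c:ℝ):ℂ) * (q t * (((((-1:ℝ))^(m+1) * (t/x) : ℝ):ℂ) * wF x m t))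
        = -(ψ t * wF x m t) := by
      calc ((c:ℝ):ℂ) * (q t * (((((-1:ℝ))^(m+1) * (t/x) : ℝ):ℂ) * wF x m t))
          = (((c:ℝ):ℂ) * ((((-1:ℝ))^(m+1) * (t/x) : ℝ):ℂ)) * q t * wF x m t := by ring
        _ = -(t:ℂ) * q t * wF x m t := by rw [key2]
        _ = -(q t * (t:ℂ) * wF x m t) := by ring
        _ = -(ψ t * wF x m t) := by rw [key t]
    rw [smul_add, Complex.real_smul, Complex.real_smul, Complex.real_smul, hsecond]
    ring
  -- integrability
  have hcont_w := fun n => wF_cont x hx0 n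
  have hψw_int : Integrable (fun t => ψ t * wF x m t) := by
    apply Continuous.integrable_of_hasCompactSupport
    · exact (hsm.continuous).mul (hcont_w m)
    · apply supp_compact (K := K)
      intro t ht
      apply hsupp
      rcases Function.mem_support.mp ht with h
      intro hψt
      exact h (by simp [hψt])
  have hφw_int : Integrable (fun t => (c • deriv q t) * wF x (m+1) t) := by
    apply Continuous.integrable_of_hasCompactSupport
    · exact ((hqd'.continuous).const_smul c).mul (hcont_w (m+1))
    · apply supp_compact (K := K)
      intro t ht
      rcases Function.mem_support.mp ht with h
      by_contra hmem
      have : deriv q t = 0 := by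
        have := iterDeriv_zero_off hqsupp hmem 1
        rwa [iteratedDeriv_one] at this
      exact h (by simp [this])
  have hG_int : Integrable (fun t => c • (q t * wF x (m+1) t)) := by
    apply Continuous.integrable_of_hasCompactSupport
    · exact ((hqsm.continuous).mul (hcont_w (m+1))).const_smul c
    · apply supp_compact (K := K)
      intro t ht
      rcases Function.mem_support.mp ht with h
      by_contra hmem
      have : q t = 0 := by
        by_contra h'
        exact hmem (hqsupp h')
      exact h (by simp [this])
  have hzero := integral_eq_zero_of_hasDerivAt_of_integrable hG
    (by exact hφw_int.sub hψw_int) hG_int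
  rw [integral_sub hφw_int hψw_int] at hzero
  have := sub_eq_zero.mp hzero
  exact this.symm

lemma reduce_integral {K x : ℝ} (hK : 1 ≤ K) (hx : 0 < x) {g : ℝ → ℂ}
    (hg : ContDiff ℝ ∞ g) (hsupp : Function.support g ⊆ Set.Icc K (2*K)) :
    ∫ y in Set.Ioi (0:ℝ),
        g (Real.sqrt (2 * x * y)) * (Real.sin (x + y - Real.pi / 4) : ℂ) *
          (((Real.pi * y) ^ (-(1 : ℝ)/2) : ℝ) : ℂ)
      = (Real.sqrt (2*x) / (Real.sqrt Real.pi * x)) • ∫ t : ℝ, g t * wF x 0 t := by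
  have hK0 : (0:ℝ) < K := lt_of_lt_of_le one_pos hK
  have hx0 : x ≠ 0 := ne_of_gt hx
  set F : ℝ → ℂ := fun y =>
    g (Real.sqrt (2 * x * y)) * (Real.sin (x + y - Real.pi / 4) : ℂ) *
      (((Real.pi * y) ^ (-(1 : ℝ)/2) : ℝ) : ℂ) with hFdef
  have hg0 : ∀ s, s ∉ Set.Icc K (2*K) → g s = 0 := by
    intro s hs; by_contra h; exact hs (hsupp h)
  -- support of F
  have hFsupp : ∀ y : ℝ, F y ≠ 0 → K^2/(2*x) ≤ y ∧ y ≤ 2*K^2/x := by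
    intro y hy
    have hgne : g (Real.sqrt (2*x*y)) ≠ 0 := by
      intro h; apply hy; simp [hFdef, h]
    have hmem : Real.sqrt (2*x*y) ∈ Set.Icc K (2*K) := by
      by_contra h; exact hgne (hg0 _ h)
    have h2xy : 0 ≤ 2*x*y := by
      by_contra h
      have : Real.sqrt (2*x*y) = 0 := Real.sqrt_eq_zero_of_nonpos (by linarith)
      rw [this] at hmem
      exact absurd hmem.1 (by linarith)
    have hsq : Real.sqrt (2*x*y) ^ 2 = 2*x*y := Real.sq_sqrt h2xy
    have h1 : K^2 ≤ 2*x*y := by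
      rw [← hsq]
      exact pow_le_pow_left₀ hK0.le hmem.1 2
    have h2 : 2*x*y ≤ (2*K)^2 := by
      rw [← hsq]
      exact pow_le_pow_left₀ (Real.sqrt_nonneg _) hmem.2 2
    constructor
    · rw [div_le_iff₀ (by positivity)]; linarith
    · rw [le_div_iff₀ hx]; nlinarith
  -- restrict to the real line
  have hstep1 : ∫ y in Set.Ioi (0:ℝ), F y = ∫ y : ℝ, F y := by
    apply setIntegral_eq_integral_of_forall_compl_eq_zero
    intro y hy
    have hy0 : y ≤ 0 := by simpa using hy
    have : Real.sqrt (2*x*y) = 0 := Real.sqrt_eq_zero_of_nonpos (by nlinarith)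
    have hg0' : g (Real.sqrt (2*x*y)) = 0 := by
      rw [this]
      exact hg0 0 (by simp; intro h; linarith)
    simp [hFdef, hg0']
  -- support inside the image interval
  set fa : ℝ := (K/2)^2/(2*x) with hfa
  set fb : ℝ := (3*K)^2/(2*x) with hfb
  have hstep2 : ∫ y : ℝ, F y = ∫ y in fa..fb, F y := by
    symm
    apply intervalIntegral.integral_eq_integral_of_support_subset
    intro y hy
    obtain ⟨h1, h2⟩ := hFsupp y hy
    constructor
    · rw [hfa]
      calc (K/2)^2/(2*x) < K^2/(2*x) := by
            rw [div_lt_div_iff₀ (by positivity) (by positivity)]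
            nlinarith [mul_pos (pow_pos hK0 2) hx]
        _ ≤ y := h1
    · rw [hfb]
      calc y ≤ 2*K^2/x := h2
        _ ≤ (3*K)^2/(2*x) := by
            rw [div_le_div_iff₀ (by positivity) (by positivity)]
            nlinarith
  -- change of variables y = t^2/(2x)
  set f : ℝ → ℝ := fun t => t^2/(2*x) with hfdef
  have hab : (K/2 : ℝ) ≤ 3*K := by linarith
  have huIcc : Set.uIcc (K/2) (3*K) = Set.Icc (K/2) (3*K) := Set.uIcc_of_le hab
  have hderiv : ∀ t ∈ Set.uIcc (K/2) (3*K), HasDerivAt f (t/x) t := by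
    intro t _
    have h1 : HasDerivAt (fun t : ℝ => t^2) (2*t) t := by
      simpa using hasDerivAt_pow 2 t
    have h2 : HasDerivAt f (2*t/(2*x)) t := h1.div_const _
    convert h2 using 1
    field_simp
  have himg : f '' Set.uIcc (K/2) (3*K) ⊆ Set.Ioi (0:ℝ) := by
    rintro z ⟨t, ht, rfl⟩
    rw [huIcc] at ht
    have ht0 : 0 < t := lt_of_lt_of_le (by positivity) ht.1
    have : (0:ℝ) < t^2/(2*x) := by positivity
    exact this
  have hFcontOn : ContinuousOn F (Set.Ioi (0:ℝ)) := by
    apply ContinuousOn.mul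
    apply ContinuousOn.mul
    · apply Continuous.continuousOn
      exact hg.continuous.comp (Real.continuous_sqrt.comp (by fun_prop))
    · apply Continuous.continuousOn
      exact Complex.continuous_ofReal.comp (Real.continuous_sin.comp (by fun_prop))
    · apply Complex.continuous_ofReal.comp_continuousOn
      intro y hy
      apply ContinuousAt.continuousWithinAt
      apply ContinuousAt.rpow_const
      · exact (continuous_const.mul continuous_id).continuousAt
      · left
        have : (0:ℝ) < y := hy
        positivity
  have hstep3 : (∫ t in (K/2)..(3*K), (t/x) • (F ∘ f) t) = ∫ y in f (K/2)..f (3*K), F y := by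
    apply intervalIntegral.integral_comp_smul_deriv' hderiv
    · exact (continuous_id.div_const x).continuousOn
    · exact hFcontOn.mono himg
  have hfab : f (K/2) = fa ∧ f (3*K) = fb := ⟨rfl, rfl⟩
  -- pointwise identification on the interval
  set v : ℝ := Real.sqrt (2*x) / (Real.sqrt Real.pi * x) with hvdef
  have hstep4 : (∫ t in (K/2)..(3*K), (t/x) • (F ∘ f) t)
      = ∫ t in (K/2)..(3*K), v • (g t * wF x 0 t) := by
    apply intervalIntegral.integral_congr
    intro t ht
    rw [huIcc] at ht
    have ht0 : 0 < t := lt_of_lt_of_le (by positivity) ht.1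
    have hsqrt : Real.sqrt (2*x*(t^2/(2*x))) = t := by
      rw [show 2*x*(t^2/(2*x)) = t^2 by field_simp]
      exact Real.sqrt_sq ht0.le
    have hA : (0:ℝ) < Real.pi * (t^2/(2*x)) := by positivity
    have hrpow : (Real.pi * (t^2/(2*x))) ^ (-(1:ℝ)/2)
        = Real.sqrt (2*x) / (Real.sqrt Real.pi * t) := by
      rw [show (-(1:ℝ)/2) = -(1/2 : ℝ) by norm_num, Real.rpow_neg hA.le,
        ← Real.sqrt_eq_rpow]
      rw [Real.sqrt_mul Real.pi_pos.le, Real.sqrt_div (sq_nonneg t), Real.sqrt_sq ht0.le]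
      have h1 : Real.sqrt Real.pi ≠ 0 := by positivity
      have h2 : Real.sqrt (2*x) ≠ 0 := by positivity
      have h3 : t ≠ 0 := ne_of_gt ht0
      field_simp
    have hreal : (t/x) * ((Real.pi * (t^2/(2*x))) ^ (-(1:ℝ)/2)) = v := by
      rw [hrpow, hvdef]
      have h1 : Real.sqrt Real.pi ≠ 0 := by
        have := Real.sqrt_pos.mpr Real.pi_pos; linarith
      field_simp
    show (t/x) • F (f t) = v • (g t * wF x 0 t)
    have hw0 : wF x 0 t = ((Real.sin (x + t^2/(2*x) - Real.pi/4) : ℝ) : ℂ) := by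
      simp [wF]
    rw [hw0]
    simp only [hFdef, hfdef, hsqrt]
    rw [Complex.real_smul, Complex.real_smul, ← hreal]
    push_cast
    ring
  have hstep5 : (∫ t in (K/2)..(3*K), v • (g t * wF x 0 t))
      = v • ∫ t : ℝ, g t * wF x 0 t := by
    rw [intervalIntegral.integral_smul]
    congr 1
    apply intervalIntegral.integral_eq_integral_of_support_subset
    intro t ht
    have hgt : g t ≠ 0 := by
      intro h; apply ht; simp [h]
    have := hsupp hgt
    constructor
    · linarith [this.1]
    · linarith [this.2]
  rw [hstep1, hstep2, ← hfab.1, ← hfab.2, ← hstep3, hstep4, hstep5]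

theorem h_transform_rapid_decay (C : ℕ → ℝ) (j : ℕ) :
    ∃ C' : ℝ, 0 < C' ∧ ∀ (K : ℝ), 1 ≤ K → ∀ g : ℝ → ℂ,
      ContDiff ℝ (⊤ : ℕ∞) g →
      Function.support g ⊆ Set.Icc K (2 * K) →
      (∀ i : ℕ, ∀ y : ℝ, ‖iteratedDeriv i g y‖ ≤ C i * K ^ (-(i : ℝ))) →
      ∀ x : ℝ, 0 < x →
        ‖∫ y in Set.Ioi (0 : ℝ),
            g (Real.sqrt (2 * x * y)) * (Real.sin (x + y - Real.pi / 4) : ℂ) *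
              (((Real.pi * y) ^ (-(1 : ℝ)/2) : ℝ) : ℂ)‖
          ≤ C' * (x * K ^ (-(2 : ℝ))) ^ j := by
  refine ⟨2 * max (DD C j 0) (DD C (j+1) 0) + 1, by
    have h1 := DD_nonneg C j 0
    have h2 := DD_nonneg C (j+1) 0
    positivity, ?_⟩
  intro K hK g hg hsupp hC x hx
  have hK0 : (0:ℝ) < K := lt_of_lt_of_le one_pos hK
  have hg' : ContDiff ℝ ∞ g := hg.of_le (by simp)
  have hsupp' : Function.support g ⊆ Set.Icc K (2*K) := by
    intro s hs; simpa [two_mul] using hsupp hs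
  -- convert the derivative bounds
  have hb : ∀ i t, ‖iteratedDeriv i g t‖ ≤ DD C 0 i / K ^ i := by
    intro i t
    have h1 := hC i t
    have h2 : K ^ (-(i:ℝ)) = (K ^ i)⁻¹ := by
      rw [Real.rpow_neg hK0.le, Real.rpow_natCast]
    rw [h2] at h1
    refine le_trans h1 ?_
    rw [div_eq_mul_inv]
    apply mul_le_mul_of_nonneg_right _ (by positivity)
    exact le_max_left _ _
  have spec := psiF_spec hK hx hg' hsupp' hb
  -- iterated integration by parts
  have chain : ∀ m, (∫ t : ℝ, g t * wF x 0 t) = ∫ t : ℝ, psiF x g m t * wF x m t := by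
    intro m
    induction m with
    | zero => rfl
    | succ m ih =>
      rw [ih]
      have hstep := ibp_step hK hx (spec m).1 (spec m).2.1 m
      exact hstep
  -- the uniform bound on the m-th integral
  have bound : ∀ m, ‖∫ t : ℝ, psiF x g m t * wF x m t‖
      ≤ DD C m 0 * x^m / K^(2*m) * K := by
    intro m
    have hzero : ∀ t, t ∉ Set.Icc K (2*K) → psiF x g m t * wF x m t = 0 := by
      intro t ht
      have : psiF x g m t = 0 := by
        by_contra h; exact ht ((spec m).2.1 h)
      simp [this]
    rw [← setIntegral_eq_integral_of_forall_compl_eq_zero hzero]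
    have hM : ∀ t ∈ Set.Icc K (2*K), ‖psiF x g m t * wF x m t‖
        ≤ DD C m 0 * x^m / K^(2*m) := by
      intro t _
      rw [norm_mul]
      have h1 : ‖psiF x g m t‖ ≤ DD C m 0 * x^m / K^(2*m) := by
        have := (spec m).2.2 0 t
        simpa using this
      calc ‖psiF x g m t‖ * ‖wF x m t‖ ≤ (DD C m 0 * x^m / K^(2*m)) * 1 := by
            apply mul_le_mul h1 (wF_norm_le x m t) (norm_nonneg _)
            have := DD_nonneg C m 0
            positivity
        _ = DD C m 0 * x^m / K^(2*m) := mul_one _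
    calc ‖∫ t in Set.Icc K (2*K), psiF x g m t * wF x m t‖
        ≤ (DD C m 0 * x^m / K^(2*m)) * (volume (Set.Icc K (2*K))).toReal :=
          norm_setIntegral_le_of_norm_le_const (by
            rw [Real.volume_Icc]; exact ENNReal.ofReal_lt_top) hM
      _ = DD C m 0 * x^m / K^(2*m) * K := by
          rw [Real.volume_Icc, ENNReal.toReal_ofReal (by linarith)]
          ring_nf
  -- assemble
  set v : ℝ := Real.sqrt (2*x) / (Real.sqrt Real.pi * x) with hvdef
  have hv_nonneg : 0 ≤ v := by positivity
  have hv : v ≤ 2 / Real.sqrt x := by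
    have hnum : Real.sqrt (2*x) ≤ 2 * Real.sqrt x := by
      rw [Real.sqrt_mul (by norm_num : (0:ℝ) ≤ 2) x]
      apply mul_le_mul_of_nonneg_right _ (Real.sqrt_nonneg x)
      calc Real.sqrt 2 ≤ Real.sqrt 4 := Real.sqrt_le_sqrt (by norm_num)
        _ = 2 := by rw [show (4:ℝ) = 2^2 by norm_num, Real.sqrt_sq (by norm_num)]
    have hden : x ≤ Real.sqrt Real.pi * x := by
      apply le_mul_of_one_le_left hx.le
      calc (1:ℝ) = Real.sqrt 1 := by simp
        _ ≤ Real.sqrt Real.pi := Real.sqrt_le_sqrt (by linarith [Real.pi_gt_three])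
    calc v ≤ (2 * Real.sqrt x) / x := by
          apply div_le_div₀ (by positivity) hnum hx hden
      _ = 2 / Real.sqrt x := by
          rw [show x = Real.sqrt x * Real.sqrt x from (Real.mul_self_sqrt hx.le).symm]
          have : Real.sqrt x ≠ 0 := by positivity
          field_simp
          rw [Real.sqrt_sq (Real.sqrt_nonneg x)]
  have hEq := reduce_integral hK hx hg' hsupp'
  rw [hEq]
  have hXpow : (x * K ^ (-(2:ℝ)))^j = x^j / K^(2*j) := by
    have h2 : K ^ (-(2:ℝ)) = (K^(2:ℕ))⁻¹ := by
      rw [show (-(2:ℝ)) = -((2:ℕ):ℝ) by norm_num, Real.rpow_neg hK0.le, Real.rpow_natCast]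
    rw [h2, mul_pow, inv_pow, ← pow_mul, ← div_eq_mul_inv]
  -- choose the number of integrations by parts depending on the size of x
  rcases le_or_gt (K^2) x with hcase | hcase
  · -- large x : use m = j
    rw [chain j]
    have hKx : K ≤ Real.sqrt x := by
      rw [show K = Real.sqrt (K^2) from (Real.sqrt_sq hK0.le).symm]
      exact Real.sqrt_le_sqrt hcase
    have hsx : (0:ℝ) < Real.sqrt x := Real.sqrt_pos.mpr hx
    calc ‖v • ∫ t : ℝ, psiF x g j t * wF x j t‖
        ≤ (2 / Real.sqrt x) * (DD C j 0 * x^j / K^(2*j) * K) := by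
          rw [norm_smul, Real.norm_eq_abs, abs_of_nonneg hv_nonneg]
          apply mul_le_mul hv (bound j) (norm_nonneg _) (by positivity)
      _ = (2 * DD C j 0) * (x^j / K^(2*j)) * (K / Real.sqrt x) := by ring
      _ ≤ (2 * DD C j 0) * (x^j / K^(2*j)) * 1 := by
          apply mul_le_mul_of_nonneg_left _ (by
            have := DD_nonneg C j 0
            positivity)
          rw [div_le_one hsx]
          exact hKx
      _ ≤ (2 * max (DD C j 0) (DD C (j+1) 0) + 1) * (x * K ^ (-(2:ℝ)))^j := by
          rw [hXpow, mul_one]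
          apply mul_le_mul_of_nonneg_right _ (by positivity)
          have := le_max_left (DD C j 0) (DD C (j+1) 0)
          linarith
  · -- small x : use m = j+1
    rw [chain (j+1)]
    have hxK : Real.sqrt x ≤ K := by
      rw [show K = Real.sqrt (K^2) from (Real.sqrt_sq hK0.le).symm]
      exact Real.sqrt_le_sqrt hcase.le
    have hsx : (0:ℝ) < Real.sqrt x := Real.sqrt_pos.mpr hx
    have hxsq : Real.sqrt x * Real.sqrt x = x := Real.mul_self_sqrt hx.le
    calc ‖v • ∫ t : ℝ, psiF x g (j+1) t * wF x (j+1) t‖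
        ≤ (2 / Real.sqrt x) * (DD C (j+1) 0 * x^(j+1) / K^(2*(j+1)) * K) := by
          rw [norm_smul, Real.norm_eq_abs, abs_of_nonneg hv_nonneg]
          apply mul_le_mul hv (bound (j+1)) (norm_nonneg _) (by positivity)
      _ = (2 * DD C (j+1) 0) * (x^j / K^(2*j)) * (x / (Real.sqrt x * K)) := by
          rw [show 2*(j+1) = 2*j+1+1 by ring, pow_succ x j, pow_succ K (2*j+1),
            pow_succ K (2*j)]
          field_simp [hsx.ne', hK0.ne']
      _ ≤ (2 * DD C (j+1) 0) * (x^j / K^(2*j)) * 1 := by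
          apply mul_le_mul_of_nonneg_left _ (by
            have := DD_nonneg C (j+1) 0
            positivity)
          rw [div_le_one (by positivity)]
          calc x = Real.sqrt x * Real.sqrt x := hxsq.symm
            _ ≤ Real.sqrt x * K := by
                apply mul_le_mul_of_nonneg_left hxK hsx.le
      _ ≤ (2 * max (DD C j 0) (DD C (j+1) 0) + 1) * (x * K ^ (-(2:ℝ)))^j := by
          rw [hXpow, mul_one]
          apply mul_le_mul_of_nonneg_right _ (by positivity)
          have := le_max_right (DD C j 0) (DD C (j+1) 0)
          linarith
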